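/- For all real numbers a and b, the integral over ℝ of x·Φ(a+bx)·φ(x) dx equals (b/√(1+b²))·φ(a/√(1+b²)). -/

import Mathlib

open MeasureTheory Real

/-- Standard normal PDF. -/
noncomputable def stdPDF (x : ℝ) : ℝ := (Real.sqrt (2 * Real.pi))⁻¹ * Real.exp (-(x ^ 2) / 2)

/-- Standard normal CDF. -/
noncomputable def stdCDF (x : ℝ) : ℝ := ∫ t in Set.Iic x, stdPDF t

/-! Gaussian integration by parts (Stein's identity) turns `∫ x g(x) φ(x) dx` into
`∫ g'(x) φ(x) dx`; for `g = Φ(a + b ·)` this is `b ∫ φ(a + b x) φ(x) dx`. Completing the square,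
`φ(a + b x) φ(x) = φ(a / s) φ(s x + a b / s)` with `s = √(1 + b²)`, and the last factor
integrates to `1 / s`. -/

open Filter Topology ProbabilityTheory

lemma stdPDF_eq_gaussianPDFReal : stdPDF = gaussianPDFReal 0 1 := by
  ext x; simp [stdPDF, gaussianPDFReal]

lemma stdPDF_nonneg (x : ℝ) : 0 ≤ stdPDF x := by
  unfold stdPDF; positivity

lemma continuous_stdPDF : Continuous stdPDF := by
  unfold stdPDF; fun_prop

lemma integrable_stdPDF : Integrable stdPDF :=
  stdPDF_eq_gaussianPDFReal ▸ integrable_gaussianPDFReal 0 1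

lemma integral_stdPDF : ∫ x, stdPDF x = 1 :=
  stdPDF_eq_gaussianPDFReal ▸ integral_gaussianPDFReal_eq_one 0 one_ne_zero

lemma hasDerivAt_stdPDF (x : ℝ) : HasDerivAt stdPDF (-x * stdPDF x) x := by
  refine ((((hasDerivAt_id x).pow 2).neg.div_const 2).exp.const_mul (√(2 * π))⁻¹).congr_deriv ?_
  simp only [stdPDF, id, Pi.neg_apply, Pi.pow_apply]
  ring

lemma tendsto_stdPDF_cocompact : Tendsto stdPDF (cocompact ℝ) (𝓝 0) := by
  have h := tendsto_rpow_abs_mul_exp_neg_mul_sq_cocompact (by norm_num : (0 : ℝ) < 1 / 2) 0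
  rw [← mul_zero (√(2 * π))⁻¹]
  refine (h.const_mul _).congr fun x => ?_
  simp only [stdPDF, Real.rpow_zero, one_mul]
  ring_nf

lemma integrable_mul_stdPDF : Integrable fun x => x * stdPDF x := by
  refine ((integrable_mul_exp_neg_mul_sq (by norm_num : (0 : ℝ) < 1 / 2)).const_mul
    (√(2 * π))⁻¹).congr (Eventually.of_forall fun x => ?_)
  simp only [stdPDF]
  ring_nf

lemma abs_stdCDF_le_one (x : ℝ) : |stdCDF x| ≤ 1 := by
  unfold stdCDF
  rw [abs_of_nonneg (setIntegral_nonneg measurableSet_Iic fun t _ => stdPDF_nonneg t),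
    ← integral_stdPDF]
  exact setIntegral_le_integral integrable_stdPDF (Eventually.of_forall stdPDF_nonneg)

lemma hasDerivAt_stdCDF (x : ℝ) : HasDerivAt stdCDF (stdPDF x) x := by
  have hsplit : ∀ y, stdCDF 0 + ∫ t in (0 : ℝ)..y, stdPDF t = stdCDF y := fun y => by
    rw [← intervalIntegral.integral_Iic_sub_Iic integrable_stdPDF.integrableOn
      integrable_stdPDF.integrableOn, stdCDF, stdCDF]
    ring
  have := (intervalIntegral.integral_hasDerivAt_right (a := 0) (b := x)
    integrable_stdPDF.intervalIntegrable (continuous_stdPDF.stronglyMeasurableAtFilter _ _)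
    continuous_stdPDF.continuousAt).const_add (stdCDF 0)
  exact this.congr_of_eventuallyEq (Eventually.of_forall fun y => (hsplit y).symm)

lemma integral_stdPDF_mul_add (c d : ℝ) : ∫ x, stdPDF (c * x + d) = |c|⁻¹ := by
  rw [Measure.integral_comp_mul_left (fun y => stdPDF (y + d)), integral_add_right_eq_self,
    integral_stdPDF, abs_inv, smul_eq_mul, mul_one]

lemma stdPDF_add_mul_mul_stdPDF (a b x : ℝ) :
    stdPDF (a + b * x) * stdPDF x =
      stdPDF (a / √(1 + b ^ 2)) * stdPDF (√(1 + b ^ 2) * x + a * b / √(1 + b ^ 2)) := by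
  have hsq : √(1 + b ^ 2) ^ 2 = 1 + b ^ 2 := Real.sq_sqrt (by positivity)
  simp only [stdPDF]
  rw [mul_mul_mul_comm, mul_mul_mul_comm _ (rexp _), ← Real.exp_add, ← Real.exp_add]
  congr 2
  field_simp
  rw [hsq]
  ring

lemma stdPDF_le_stdPDF_zero (x : ℝ) : stdPDF x ≤ stdPDF 0 := by
  unfold stdPDF
  gcongr ?_ * rexp ?_
  nlinarith [sq_nonneg x]

lemma integrable_stdPDF_add_mul_mul_stdPDF (a b : ℝ) :
    Integrable fun x => stdPDF (a + b * x) * stdPDF x :=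
  integrable_stdPDF.bdd_mul (c := stdPDF 0)
    (continuous_stdPDF.comp (by fun_prop)).aestronglyMeasurable
    (Eventually.of_forall fun x => by
      rw [Real.norm_of_nonneg (stdPDF_nonneg _)]; exact stdPDF_le_stdPDF_zero _)

lemma integral_stdPDF_add_mul_mul_stdPDF (a b : ℝ) :
    ∫ x, stdPDF (a + b * x) * stdPDF x = stdPDF (a / √(1 + b ^ 2)) / √(1 + b ^ 2) := by
  simp_rw [stdPDF_add_mul_mul_stdPDF a b]
  rw [integral_const_mul, integral_stdPDF_mul_add, abs_of_pos (by positivity)]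
  rfl

theorem integral_mul_mul_stdPDF_of_hasDerivAt {g g' : ℝ → ℝ} {C : ℝ}
    (hg : ∀ x, HasDerivAt g (g' x) x) (hC : ∀ x, |g x| ≤ C)
    (hg' : Integrable fun x => g' x * stdPDF x) :
    ∫ x, x * g x * stdPDF x = ∫ x, g' x * stdPDF x := by
  have hmeas : AEStronglyMeasurable g :=
    (continuous_iff_continuousAt.2 fun x => (hg x).continuousAt).aestronglyMeasurable
  have hint : Integrable fun x => x * g x * stdPDF x := by
    refine (integrable_mul_stdPDF.bdd_mul hmeas (c := C) (Eventually.of_forall hC)).congr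
      (Eventually.of_forall fun x => ?_)
    dsimp only
    ring
  have hlim : Tendsto (fun x => g x * stdPDF x) (cocompact ℝ) (𝓝 0) := by
    refine squeeze_zero_norm (fun x => ?_)
      (by simpa using tendsto_stdPDF_cocompact.const_mul C)
    rw [norm_mul, Real.norm_eq_abs, Real.norm_of_nonneg (stdPDF_nonneg x)]
    exact mul_le_mul_of_nonneg_right (hC x) (stdPDF_nonneg x)
  have hderiv (x : ℝ) : HasDerivAt (fun x => g x * stdPDF x)
      (g' x * stdPDF x - x * g x * stdPDF x) x :=
    ((hg x).mul (hasDerivAt_stdPDF x)).congr_deriv (by ring)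
  have hftc := integral_of_hasDerivAt_of_tendsto hderiv (hg'.sub hint)
    (hlim.mono_left atBot_le_cocompact) (hlim.mono_left atTop_le_cocompact)
  rw [sub_zero, integral_sub hg' hint, sub_eq_zero] at hftc
  exact hftc.symm

theorem gaussian_x_cdf_smoothing (a b : ℝ) :
    (∫ x : ℝ, x * stdCDF (a + b * x) * stdPDF x) =
      (b / Real.sqrt (1 + b ^ 2)) * stdPDF (a / Real.sqrt (1 + b ^ 2)) := by
  have hderiv (x : ℝ) : HasDerivAt (fun y => stdCDF (a + b * y)) (b * stdPDF (a + b * x)) x := by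
    refine ((hasDerivAt_stdCDF _).comp x
      (((hasDerivAt_id x).const_mul b).const_add a)).congr_deriv ?_
    simp only [id, mul_one, mul_comm]
  have hint : Integrable fun x => b * stdPDF (a + b * x) * stdPDF x := by
    simpa only [mul_assoc] using (integrable_stdPDF_add_mul_mul_stdPDF a b).const_mul b
  rw [integral_mul_mul_stdPDF_of_hasDerivAt hderiv (fun x => abs_stdCDF_le_one _) hint]
  simp_rw [mul_assoc]
  rw [integral_const_mul, integral_stdPDF_add_mul_mul_stdPDF]
  ring
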